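/- arXiv:2207.05656 — 3 statements merged into one kernel-verified Lean document; each statement's English description precedes it below -/
import Mathlib

section
/- For every integer n ≥ 2, the coherence of the optimal probe state is strictly less than the maximal coherence available in dimension n+1: (2/(n+2))·cot²(π/(2n+4)) − 1 < n. (Hence maximally coherent probe states are not required for optimal Bayesian phase estimation.) -/
/-!
With `m = n + 2` and `cot² = 1 / sin² - 1`, the inequality becomes
`2 < (m² - m + 2) · sin² (π / 2m)`. Since `m² - m + 2 ≥ 7m²/8` and
`sin x ≥ x (1 - x²/6)`, the right-hand side is at least `7π²/32 · (1 - π²/384)²`,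
which exceeds `2` by `π > 3.14`.
-/

open Real

theorem Real.cot_sq_eq_inv_sin_sq_sub_one {x : ℝ} (hx : sin x ≠ 0) :
    cot x ^ 2 = (sin x ^ 2)⁻¹ - 1 := by
  rw [cot_eq_cos_div_sin, div_pow, cos_sq']
  field_simp

theorem two_lt_mul_sin_pi_div_two_mul_sq {m : ℝ} (hm : 4 ≤ m) :
    2 < (m ^ 2 - m + 2) * sin (π / (2 * m)) ^ 2 := by
  set x := π / (2 * m) with hx
  have hπ : 3.14 < π := pi_gt_d2
  have hx_pos : 0 < x := by positivity
  have hx_le : x ≤ π / 8 := by rw [hx]; gcongr; linarith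
  have hpoly : 7 * π ^ 2 / 32 ≤ (m ^ 2 - m + 2) * x ^ 2 := by
    have : (m ^ 2 - m + 2) * x ^ 2 = 7 * π ^ 2 / 32 + (m - 4) ^ 2 * π ^ 2 / (32 * m ^ 2) := by
      rw [hx]; field_simp; ring
    rw [this]
    exact le_add_of_nonneg_right (by positivity)
  have hsin : x * (1 - π ^ 2 / 384) ≤ sin x := by
    have := sin_gt_sub_cube hx_pos
    have : x ^ 2 ≤ (π / 8) ^ 2 := by gcongr
    nlinarith
  have hc : 0 < 1 - π ^ 2 / 384 := by nlinarith [pi_lt_d2]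
  have hquad : 0 ≤ m ^ 2 - m + 2 := by nlinarith
  calc 2 < 7 * 3.14 ^ 2 / 32 * (1 - 3.15 ^ 2 / 384) ^ 2 := by norm_num
    _ ≤ 7 * π ^ 2 / 32 * (1 - π ^ 2 / 384) ^ 2 := by gcongr; linarith [pi_lt_d2]
    _ ≤ (m ^ 2 - m + 2) * x ^ 2 * (1 - π ^ 2 / 384) ^ 2 := by gcongr
    _ ≤ (m ^ 2 - m + 2) * sin x ^ 2 := by
      rw [mul_assoc, ← mul_pow]
      gcongr

/-- The coherence `𝒞* = (2/(n+2))·cot²(π/(2n+4)) − 1` of the optimal probe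
state is strictly smaller than the maximal coherence `n` available in
dimension `n+1`. -/
theorem optimal_coherence_lt_max (n : ℕ) (hn : 2 ≤ n) :
    2 / ((n : ℝ) + 2) * Real.cot (π / (2 * n + 4)) ^ 2 - 1 < n := by
  set m : ℝ := n + 2 with hm_def
  have hm : 4 ≤ m := by rw [hm_def]; norm_cast; omega
  have hangle : π / (2 * n + 4) = π / (2 * m) := by rw [hm_def]; ring
  have hsin : 0 < sin (π / (2 * m)) :=
    sin_pos_of_pos_of_lt_pi (by positivity) (div_lt_self pi_pos (by linarith))
  have key := two_lt_mul_sin_pi_div_two_mul_sq hm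
  rw [hangle, cot_sq_eq_inv_sin_sq_sub_one hsin.ne', show (n : ℝ) = m - 2 by rw [hm_def]; ring]
  generalize sin (π / (2 * m)) = s at hsin key
  have hm_pos : 0 < m := by linarith
  rw [← sub_pos]
  field_simp
  nlinarith
end

section
/- Let n ≥ 1, 𝒞 ≥ 0, z ≥ 0 and λ ∈ ℝ be such that H + z·J − λ·I is positive semidefinite, where J is the (n+1)×(n+1) all-ones matrix. Then for every pair of positive semidefinite matrices ρ, τ with tr ρ = tr τ = 1 and ρ + 𝒞τ diagonal, one has tr(Hρ) ≥ λ − z·(𝒞 + 1). -/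
open Real Matrix Complex ComplexOrder

/-- The complex `(n+1)×(n+1)` tridiagonal matrix `tridiag(-1, 2, -1)`. -/
noncomputable def HmatC (n : ℕ) : Matrix (Fin (n+1)) (Fin (n+1)) ℂ :=
  Matrix.of fun i j =>
    if i = j then 2 else if ((i : ℤ) - (j : ℤ)).natAbs = 1 then -1 else 0

/-- The all-ones `(n+1)×(n+1)` matrix. -/
noncomputable def Jmat (n : ℕ) : Matrix (Fin (n+1)) (Fin (n+1)) ℂ :=
  Matrix.of fun _ _ => 1

/-! Weak duality for the coherence-constrained energy SDP. Pairing the certificate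
`H + zJ - λI ⪰ 0` with the state `ρ` gives `tr(Hρ) ≥ λ - z·tr(Jρ)`. Since `ρ + 𝒞τ` is diagonal,
`tr(J(ρ + 𝒞τ)) = tr(ρ + 𝒞τ) = 1 + 𝒞`, and `tr(Jτ) ≥ 0` because `J` and `τ` are positive
semidefinite; hence `tr(Jρ) ≤ 1 + 𝒞`. -/

open scoped MatrixOrder in
theorem Matrix.PosSemidef.trace_mul_nonneg {m 𝕜 : Type*} [Fintype m] [RCLike 𝕜]
    {A B : Matrix m m 𝕜} (hA : A.PosSemidef) (hB : B.PosSemidef) : 0 ≤ (A * B).trace := by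
  classical
  obtain ⟨C, rfl⟩ := CStarAlgebra.nonneg_iff_eq_star_mul_self.mp hA.nonneg
  rw [Matrix.mul_assoc, trace_mul_comm]
  exact (hB.mul_mul_conjTranspose_same C).trace_nonneg

theorem le_re_trace_mul_of_posSemidef_sub {m : Type*} [Fintype m] [DecidableEq m]
    {A ρ : Matrix m m ℂ} {lam : ℝ} (hA : (A - (lam : ℂ) • 1).PosSemidef)
    (hρ : ρ.PosSemidef) (hρ1 : ρ.trace = 1) : lam ≤ (A * ρ).trace.re := by
  have h := (hA.trace_mul_nonneg hρ).1
  rw [Matrix.sub_mul, Matrix.smul_mul, Matrix.one_mul, trace_sub, trace_smul, hρ1] at h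
  simpa using h

theorem Jmat_posSemidef (n : ℕ) : (Jmat n).PosSemidef := by
  have hJ : Jmat n = vecMulVec (fun _ => 1) (star fun _ => 1) := by
    ext i j; simp [Jmat, vecMulVec]
  rw [hJ]
  exact posSemidef_vecMulVec_self_star _

theorem trace_Jmat_mul_of_offDiag_eq_zero {n : ℕ} {σ : Matrix (Fin (n+1)) (Fin (n+1)) ℂ}
    (h : ∀ i j, i ≠ j → σ i j = 0) : (Jmat n * σ).trace = σ.trace :=
  Finset.sum_congr rfl fun i _ => by
    simp only [diag_apply, mul_apply, Jmat, of_apply, one_mul]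
    exact Finset.sum_eq_single i (fun k _ hk => h k i hk) (by simp)

theorem re_trace_Jmat_mul_le {n : ℕ} {𝒞 : ℝ} (h𝒞 : 0 ≤ 𝒞)
    {ρ τ : Matrix (Fin (n+1)) (Fin (n+1)) ℂ} (hτ : τ.PosSemidef)
    (hρ1 : ρ.trace = 1) (hτ1 : τ.trace = 1)
    (hdiag : ∀ i j, i ≠ j → (ρ + (𝒞 : ℂ) • τ) i j = 0) :
    (Jmat n * ρ).trace.re ≤ 1 + 𝒞 := by
  have hsum := congrArg re (trace_Jmat_mul_of_offDiag_eq_zero hdiag)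
  rw [Matrix.mul_add, Matrix.mul_smul, trace_add, trace_smul, trace_add, trace_smul,
    hρ1, hτ1] at hsum
  have hτJ := ((Jmat_posSemidef n).trace_mul_nonneg hτ).1
  simp only [smul_eq_mul, add_re, mul_re, ofReal_re, ofReal_im, zero_mul, sub_zero, mul_one, one_re,
    zero_re] at hsum hτJ
  linarith [mul_nonneg h𝒞 hτJ]

theorem dual_ansatz_lower_bound_general (n : ℕ) (𝒞 z lam : ℝ)
    (h𝒞 : 0 ≤ 𝒞) (hz : 0 ≤ z)
    (hpsd : (HmatC n + (z : ℂ) • Jmat n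
        - (lam : ℂ) • (1 : Matrix (Fin (n+1)) (Fin (n+1)) ℂ)).PosSemidef)
    (ρ τ : Matrix (Fin (n+1)) (Fin (n+1)) ℂ)
    (hρ : ρ.PosSemidef) (hτ : τ.PosSemidef)
    (hρ1 : ρ.trace = 1) (hτ1 : τ.trace = 1)
    (hdiag : ∀ i j, i ≠ j → (ρ + (𝒞 : ℂ) • τ) i j = 0) :
    lam - z * (𝒞 + 1) ≤ (HmatC n * ρ).trace.re := by
  have hdual := le_re_trace_mul_of_posSemidef_sub hpsd hρ hρ1
  have hJ := mul_le_mul_of_nonneg_left (re_trace_Jmat_mul_le h𝒞 hτ hρ1 hτ1 hdiag) hz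
  rw [Matrix.add_mul, Matrix.smul_mul, trace_add, trace_smul] at hdual
  simp only [smul_eq_mul, add_re, mul_re, ofReal_re, ofReal_im, zero_mul, sub_zero] at hdual
  linarith

/-- If `H + zJ − λI ⪰ 0` then `tr(Hρ) ≥ λ − z(𝒞+1)` for every state `ρ` with
robustness of coherence at most `𝒞` (certified by a state `τ` with `ρ + 𝒞τ`
diagonal). -/
theorem dual_ansatz_lower_bound (n : ℕ) (hn : 1 ≤ n) (𝒞 z lam : ℝ)
    (h𝒞 : 0 ≤ 𝒞) (hz : 0 ≤ z)
    (hpsd : (HmatC n + (z : ℂ) • Jmat n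
        - (lam : ℂ) • (1 : Matrix (Fin (n+1)) (Fin (n+1)) ℂ)).PosSemidef)
    (ρ τ : Matrix (Fin (n+1)) (Fin (n+1)) ℂ)
    (hρ : ρ.PosSemidef) (hτ : τ.PosSemidef)
    (hρ1 : ρ.trace = 1) (hτ1 : τ.trace = 1)
    (hdiag : ∀ i j, i ≠ j → (ρ + (𝒞 : ℂ) • τ) i j = 0) :
    lam - z * (𝒞 + 1) ≤ (HmatC n * ρ).trace.re :=
  dual_ansatz_lower_bound_general n 𝒞 z lam h𝒞 hz hpsd ρ τ hρ hτ hρ1 hτ1 hdiag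
end

section
/- Define g(θ) = 2·sinθ·(l²·(4 + sinθ) − 2)/(1 + sinθ)² for θ ∈ [0, π/2] and a real parameter l > 0. Then: (a) if l² ≥ 1/2, g(θ) ≥ 0 for all θ ∈ [0, π/2], with minimum value 0 attained at θ = 0; and (b) if 0 < l² < 1/2, the minimum of g over [0, π/2] equals −2·(1 − 2l²)²/(2 − 3l²) and is attained at the unique θ ∈ (0, π/2] with sinθ = (1 − 2l²)/(1 − l²). -/
open Real

lemma sin_mem_unit {θ : ℝ} (h : θ ∈ Set.Icc 0 (π / 2)) :
    0 ≤ Real.sin θ ∧ Real.sin θ ≤ 1 := by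
  have hπ := Real.pi_pos
  exact ⟨Real.sin_nonneg_of_nonneg_of_le_pi h.1 (by linarith [h.2]),
    Real.sin_le_one θ⟩

lemma key_ineq (a s : ℝ) (ha : 0 < a) (ha2 : a < 1 / 2)
    (hs0 : 0 ≤ s) (hs1 : s ≤ 1) :
    -2 * (1 - 2 * a) ^ 2 / (2 - 3 * a) ≤ 2 * s * (a * (4 + s) - 2) / (1 + s) ^ 2 := by
  rw [div_le_div_iff₀ (by linarith) (by positivity)]
  nlinarith [sq_nonneg ((1 - a) * s - (1 - 2 * a)), sq_nonneg s]

/-- Minimization of `𝒬_odd(θ) = 2 sinθ·(l²(4+sinθ)−2)/(1+sinθ)²` over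
`θ ∈ [0, π/2]`: (a) if `l² ≥ 1/2` the minimum is `0`, attained at `θ = 0`;
(b) if `0 < l² < 1/2` the minimum is `−2(1−2l²)²/(2−3l²)`, attained at the
unique `θ ∈ (0, π/2]` with `sinθ = (1−2l²)/(1−l²)`. -/
theorem Qodd_minimization (l : ℝ) (hl : 0 < l)
    (g : ℝ → ℝ)
    (hg : ∀ θ : ℝ, g θ =
      2 * Real.sin θ * (l ^ 2 * (4 + Real.sin θ) - 2) / (1 + Real.sin θ) ^ 2) :
    ((1 / 2 ≤ l ^ 2 →
        (∀ θ ∈ Set.Icc 0 (π / 2), 0 ≤ g θ) ∧ g 0 = 0) ∧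
     (l ^ 2 < 1 / 2 →
        (∃! θ, θ ∈ Set.Ioc 0 (π / 2) ∧
          Real.sin θ = (1 - 2 * l ^ 2) / (1 - l ^ 2)) ∧
        (∀ θ ∈ Set.Ioc 0 (π / 2),
          Real.sin θ = (1 - 2 * l ^ 2) / (1 - l ^ 2) →
            g θ = -2 * (1 - 2 * l ^ 2) ^ 2 / (2 - 3 * l ^ 2) ∧
            ∀ θ' ∈ Set.Icc 0 (π / 2), g θ ≤ g θ'))) := by
  have ha : 0 < l ^ 2 := by positivity
  constructor
  · intro hl2
    constructor
    · intro θ hθ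
      obtain ⟨hs0, hs1⟩ := sin_mem_unit hθ
      rw [hg θ]
      apply div_nonneg _ (by positivity)
      nlinarith [mul_nonneg hs0 (by linarith : (0:ℝ) ≤ l ^ 2 - 1 / 2)]
    · rw [hg 0]; simp
  · intro hl2
    set a := l ^ 2 with ha'
    have h1a : 0 < 1 - a := by linarith
    have h23a : 0 < 2 - 3 * a := by linarith
    have h12a : 0 < 1 - 2 * a := by linarith
    set x := (1 - 2 * a) / (1 - a) with hx
    have hx0 : 0 < x := by positivity
    have hx1 : x ≤ 1 := by
      rw [hx, div_le_one h1a]; linarith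
    constructor
    · refine ⟨Real.arcsin x, ⟨⟨?_, Real.arcsin_le_pi_div_two x⟩,
        Real.sin_arcsin (by linarith) hx1⟩, ?_⟩
      · exact Real.arcsin_pos.mpr hx0
      · rintro y ⟨⟨hy0, hy1⟩, hy⟩
        have hπ := Real.pi_pos
        apply Real.injOn_sin ⟨by linarith, hy1⟩
          ⟨Real.neg_pi_div_two_le_arcsin x, Real.arcsin_le_pi_div_two x⟩
        rw [hy, Real.sin_arcsin (by linarith) hx1]
    · rintro θ ⟨hθ0, hθ1⟩ hsin
      have hval : g θ = -2 * (1 - 2 * a) ^ 2 / (2 - 3 * a) := by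
        rw [hg θ, hsin, hx]
        rw [div_eq_div_iff (by positivity) (by linarith)]
        field_simp [h1a.ne']
        ring
      refine ⟨hval, ?_⟩
      intro θ' hθ'
      obtain ⟨hs0, hs1⟩ := sin_mem_unit hθ'
      rw [hval, hg θ']
      exact key_ineq a (Real.sin θ') ha hl2 hs0 hs1
end
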